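/- arXiv:math/0202219 — 2 statements merged into one kernel-verified Lean document; each statement's English description precedes it below -/
import Mathlib

section
/- For every n ≥ 1, the number of permutations of {1,...,n} avoiding the generalized pattern 12-3 and containing exactly two occurrences of the generalized pattern 13-2 equals (n² - 3n - 6)·2^(n-4) + n. -/
/-- The value of the permutation at position `i` (0-indexed), or 0 if out of range. -/
def permVal {n : ℕ} (π : Equiv.Perm (Fin n)) (i : ℕ) : ℕ :=
  if h : i < n then (π ⟨i, h⟩ : ℕ) else 0

/-- Number of occurrences of the generalized pattern 12-3. -/
def occ12_3 {n : ℕ} (π : Equiv.Perm (Fin n)) : ℕ :=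
  ((Finset.range n ×ˢ Finset.range n).filter (fun p =>
    p.1 + 1 < p.2 ∧ permVal π p.1 < permVal π (p.1 + 1) ∧
      permVal π (p.1 + 1) < permVal π p.2)).card

/-- Number of occurrences of the generalized pattern 13-2. -/
def occ13_2 {n : ℕ} (π : Equiv.Perm (Fin n)) : ℕ :=
  ((Finset.range n ×ˢ Finset.range n).filter (fun p =>
    p.1 + 1 < p.2 ∧ permVal π p.1 < permVal π p.2 ∧
      permVal π p.2 < permVal π (p.1 + 1))).card

/-- Number of occurrences of the generalized pattern 21-3. -/
def occ21_3 {n : ℕ} (π : Equiv.Perm (Fin n)) : ℕ :=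
  ((Finset.range n ×ˢ Finset.range n).filter (fun p =>
    p.1 + 1 < p.2 ∧ permVal π (p.1 + 1) < permVal π p.1 ∧
      permVal π p.1 < permVal π p.2)).card

/-- Number of occurrences of the generalized pattern 23-1. -/
def occ23_1 {n : ℕ} (π : Equiv.Perm (Fin n)) : ℕ :=
  ((Finset.range n ×ˢ Finset.range n).filter (fun p =>
    p.1 + 1 < p.2 ∧ permVal π p.2 < permVal π p.1 ∧
      permVal π p.1 < permVal π (p.1 + 1))).card

/-- Number of occurrences of the generalized pattern 31-2. -/
def occ31_2 {n : ℕ} (π : Equiv.Perm (Fin n)) : ℕ :=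
  ((Finset.range n ×ˢ Finset.range n).filter (fun p =>
    p.1 + 1 < p.2 ∧ permVal π (p.1 + 1) < permVal π p.2 ∧
      permVal π p.2 < permVal π p.1)).card

/-- Number of occurrences of the generalized pattern 32-1. -/
def occ32_1 {n : ℕ} (π : Equiv.Perm (Fin n)) : ℕ :=
  ((Finset.range n ×ˢ Finset.range n).filter (fun p =>
    p.1 + 1 < p.2 ∧ permVal π p.2 < permVal π (p.1 + 1) ∧
      permVal π (p.1 + 1) < permVal π p.1)).card

open Finset Equiv

/-!
Remove the first entry `x` of `π` and standardise the rest to a permutation `σ`. Then `π` avoids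
12-3 iff `σ` does and either `x` lies above the first entry of `σ` or `σ` starts with its maximum.
In the first case `π` has the same 13-2 occurrences as `σ`; in the second it gains one for each
value strictly between `x` and that maximum. Counting 12-3-avoiders by their number `k` of 13-2
occurrences and by the gap `b` between their first entry and their maximum therefore gives a
linear recurrence in which only gaps `b ≤ k + 1` occur. For `k ≤ 2` it is solved in closed form by
induction on the size, and the permutations of size `n` are counted by the gap-`0` permutations of
size `n + 1`.
-/

def succAboveNat (x v : ℕ) : ℕ := if v < x then v else v + 1

lemma strictMono_succAboveNat (x : ℕ) : StrictMono (succAboveNat x) := by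
  intro u v h
  unfold succAboveNat
  split_ifs <;> omega

lemma lt_succAboveNat_iff {x v : ℕ} : x < succAboveNat x v ↔ x ≤ v := by
  unfold succAboveNat
  split_ifs <;> omega

lemma Fin.val_succAbove_eq_succAboveNat {n : ℕ} (x : Fin (n + 1)) (w : Fin n) :
    (x.succAbove w : ℕ) = succAboveNat x w := by
  unfold Fin.succAbove succAboveNat
  split_ifs <;> simp_all [Fin.lt_def]

section permVal

variable {n : ℕ} (σ : Perm (Fin n))

lemma permVal_of_lt {j : ℕ} (h : j < n) : permVal σ j = σ ⟨j, h⟩ := dif_pos h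

lemma permVal_lt {j : ℕ} (h : j < n) : permVal σ j < n := by
  rw [permVal_of_lt σ h]
  exact Fin.isLt _

lemma permVal_injOn : Set.InjOn (permVal σ) (Set.Iio n) := by
  intro i hi j hj h
  rw [permVal_of_lt σ hi, permVal_of_lt σ hj] at h
  exact Fin.mk.inj_iff.1 (σ.injective (Fin.ext h))

lemma exists_permVal_eq {v : ℕ} (hv : v < n) : ∃ j < n, permVal σ j = v :=
  ⟨σ.symm ⟨v, hv⟩, Fin.isLt _, by simp [permVal_of_lt]⟩

lemma card_filter_permVal_mem_Ico {a c : ℕ} (hc : c ≤ n) :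
    #{j ∈ range n | permVal σ j ∈ Ico a c} = c - a := by
  rw [← Nat.card_Ico a c]
  refine card_nbij (permVal σ) (fun j hj => (mem_filter.1 hj).2) ?_ fun v hv => ?_
  · exact (permVal_injOn σ).mono fun j hj => by simpa using (mem_filter.1 hj).1
  · obtain ⟨j, hj, rfl⟩ := exists_permVal_eq σ (lt_of_lt_of_le (mem_Ico.1 hv).2 hc)
    exact ⟨j, by simpa [hj] using hv, rfl⟩

end permVal

lemma permVal_zero_eq_of_forall_le {m : ℕ} (σ : Perm (Fin (m + 1)))
    (h : ∀ j < m + 1, permVal σ j ≤ permVal σ 0) : permVal σ 0 = m := by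
  obtain ⟨j, hj, hm⟩ := exists_permVal_eq σ (lt_add_one m)
  have := permVal_lt σ (Nat.zero_lt_succ m)
  have := h j hj
  omega

section permCons

variable {n : ℕ}

/-- The permutation with first entry `x` whose remaining entries are in the relative order of
`σ`. -/
def permCons (x : Fin (n + 1)) (σ : Perm (Fin n)) : Perm (Fin (n + 1)) :=
  ((finSuccEquiv n).trans σ.optionCongr).trans (finSuccEquiv' x).symm

@[simp] lemma permCons_zero (x : Fin (n + 1)) (σ : Perm (Fin n)) : permCons x σ 0 = x := by
  simp [permCons, finSuccEquiv_zero]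

@[simp] lemma permCons_succ (x : Fin (n + 1)) (σ : Perm (Fin n)) (i : Fin n) :
    permCons x σ i.succ = x.succAbove (σ i) := by
  simp [permCons, finSuccEquiv_succ]

lemma permCons_injective :
    Function.Injective (fun p : Fin (n + 1) × Perm (Fin n) => permCons p.1 p.2) := by
  rintro ⟨x, σ⟩ ⟨y, τ⟩ h
  obtain rfl : x = y := by simpa using congr($h 0)
  exact Prod.ext rfl (Equiv.ext fun i => by simpa using congr($h i.succ))

lemma permCons_bijective :
    Function.Bijective (fun p : Fin (n + 1) × Perm (Fin n) => permCons p.1 p.2) :=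
  (Fintype.bijective_iff_injective_and_card _).2
    ⟨permCons_injective, by simp [Fintype.card_perm, Nat.factorial_succ]⟩

lemma card_filter_perm_succ_eq_sum (P : Perm (Fin (n + 1)) → Prop) [DecidablePred P] :
    #{π | P π} = ∑ x, #{σ : Perm (Fin n) | P (permCons x σ)} := by
  simp only [card_filter]
  rw [← permCons_bijective.sum_comp, Fintype.sum_prod_type]

lemma permVal_permCons_zero (x : Fin (n + 1)) (σ : Perm (Fin n)) :
    permVal (permCons x σ) 0 = x := by
  simp [permVal]

lemma permVal_permCons_succ (x : Fin (n + 1)) (σ : Perm (Fin n)) {i : ℕ} (hi : i < n) :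
    permVal (permCons x σ) (i + 1) = succAboveNat x (permVal σ i) := by
  rw [permVal_of_lt _ (Nat.succ_lt_succ hi), permVal_of_lt σ hi,
    ← Fin.val_succAbove_eq_succAboveNat, ← permCons_succ]
  rfl

end permCons

section patternCount

variable (R : ℕ → ℕ → ℕ → Prop) [∀ a b c, Decidable (R a b c)] {n : ℕ}

def patternCount (π : Perm (Fin n)) : ℕ :=
  #{p ∈ range n ×ˢ range n |
    p.1 + 1 < p.2 ∧ R (permVal π p.1) (permVal π (p.1 + 1)) (permVal π p.2)}

lemma patternCount_eq_sum (π : Perm (Fin n)) :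
    patternCount R π = ∑ i ∈ range n, ∑ j ∈ range n,
      if i + 1 < j ∧ R (permVal π i) (permVal π (i + 1)) (permVal π j) then 1 else 0 := by
  rw [patternCount, card_filter, sum_product]

lemma patternCount_permCons
    (hR : ∀ f : ℕ → ℕ, StrictMono f → ∀ a b c, R (f a) (f b) (f c) ↔ R a b c)
    (x : Fin (n + 1)) (σ : Perm (Fin n)) :
    patternCount R (permCons x σ) = patternCount R σ +
      #{j ∈ range n | 1 ≤ j ∧
        R x (succAboveNat x (permVal σ 0)) (succAboveNat x (permVal σ j))} := by
  have tail : ∀ i j, i < n → j < n →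
      (i + 1 + 1 < j + 1 ∧ R (permVal (permCons x σ) (i + 1))
        (permVal (permCons x σ) (i + 1 + 1)) (permVal (permCons x σ) (j + 1)) ↔
      i + 1 < j ∧ R (permVal σ i) (permVal σ (i + 1)) (permVal σ j)) := by
    intro i j hi hj
    by_cases hij : i + 1 < j
    · rw [permVal_permCons_succ x σ hi, permVal_permCons_succ x σ (by omega),
        permVal_permCons_succ x σ hj, hR _ (strictMono_succAboveNat x)]
      exact and_congr (by omega) Iff.rfl
    · omega
  have head : ∀ j, j < n →
      (0 + 1 < j + 1 ∧ R (permVal (permCons x σ) 0) (permVal (permCons x σ) (0 + 1))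
        (permVal (permCons x σ) (j + 1)) ↔
      1 ≤ j ∧ R x (succAboveNat x (permVal σ 0)) (succAboveNat x (permVal σ j))) := by
    intro j hj
    by_cases h1 : 1 ≤ j
    · rw [permVal_permCons_zero, permVal_permCons_succ x σ (by omega),
        permVal_permCons_succ x σ hj]
      exact and_congr (by omega) Iff.rfl
    · omega
  rw [patternCount_eq_sum, patternCount_eq_sum, card_filter, sum_range_succ', sum_range_succ']
  simp only [sum_range_succ' _ n, Nat.not_lt_zero, false_and, if_false, add_zero]
  congr 1
  · refine sum_congr rfl fun i hi => sum_congr rfl fun j hj => ?_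
    exact if_congr (tail i j (mem_range.1 hi) (mem_range.1 hj)) rfl rfl
  · exact sum_congr rfl fun j hj => if_congr (head j (mem_range.1 hj)) rfl rfl

end patternCount

section permCons_occ

variable {n : ℕ} (x : Fin (n + 1)) (σ : Perm (Fin n))

lemma occ12_3_permCons : occ12_3 (permCons x σ) = occ12_3 σ +
    #{j ∈ range n | 1 ≤ j ∧ x ≤ permVal σ 0 ∧ permVal σ 0 < permVal σ j} := by
  refine (patternCount_permCons (fun a b c => a < b ∧ b < c)
    (fun f hf a b c => by simp only [hf.lt_iff_lt]) x σ).trans ?_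
  simp only [lt_succAboveNat_iff, (strictMono_succAboveNat x).lt_iff_lt]
  rfl

lemma occ13_2_permCons : occ13_2 (permCons x σ) = occ13_2 σ +
    #{j ∈ range n | 1 ≤ j ∧ x ≤ permVal σ j ∧ permVal σ j < permVal σ 0} := by
  refine (patternCount_permCons (fun a b c => a < c ∧ c < b)
    (fun f hf a b c => by simp only [hf.lt_iff_lt]) x σ).trans ?_
  simp only [lt_succAboveNat_iff, (strictMono_succAboveNat x).lt_iff_lt]
  rfl

lemma occ13_2_permCons_of_lt (h : permVal σ 0 < x) :
    occ13_2 (permCons x σ) = occ13_2 σ := by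
  rw [occ13_2_permCons, add_eq_left, card_eq_zero, filter_eq_empty_iff]
  omega

end permCons_occ

section permCons_occ_succ

variable {m : ℕ} (x : Fin (m + 2)) (σ : Perm (Fin (m + 1)))

lemma occ12_3_permCons_eq_zero_iff :
    occ12_3 (permCons x σ) = 0 ↔ occ12_3 σ = 0 ∧ (x ≤ permVal σ 0 → permVal σ 0 = m) := by
  rw [occ12_3_permCons, add_eq_zero, card_eq_zero, filter_eq_empty_iff]
  refine and_congr_right fun _ => ⟨fun h _ => permVal_zero_eq_of_forall_le σ fun j hj => ?_, ?_⟩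
  · have := h (mem_range.2 hj)
    rcases Nat.eq_zero_or_pos j with rfl | hj0 <;> omega
  · rintro h j hj ⟨-, hx, hlt⟩
    have := permVal_lt σ (mem_range.1 hj)
    omega

lemma occ13_2_permCons_of_eq (h : permVal σ 0 = m) :
    occ13_2 (permCons x σ) = occ13_2 σ + (m - x) := by
  rw [occ13_2_permCons, ← card_filter_permVal_mem_Ico σ (Nat.le_succ m)]
  congr 2
  refine filter_congr fun j hj => ?_
  rw [mem_Ico]
  constructor
  · omega
  · rintro ⟨h1, h2⟩
    refine ⟨Nat.pos_of_ne_zero fun hj0 => ?_, h1, by omega⟩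
    subst hj0
    omega

lemma occ12_3_and_occ13_2_permCons_iff {k : ℕ} :
    (occ12_3 (permCons x σ) = 0 ∧ occ13_2 (permCons x σ) = k) ↔
      occ12_3 σ = 0 ∧ (permVal σ 0 < x ∧ occ13_2 σ = k ∨
        permVal σ 0 = m ∧ x ≤ m ∧ occ13_2 σ + (m - x) = k) := by
  rw [occ12_3_permCons_eq_zero_iff, and_assoc]
  refine and_congr_right fun _ => ?_
  by_cases hlt : permVal σ 0 < x
  · rw [occ13_2_permCons_of_lt x σ hlt]
    omega
  · constructor
    · rintro ⟨hmax, hk⟩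
      have h0 := hmax (not_lt.1 hlt)
      rw [occ13_2_permCons_of_eq x σ h0] at hk
      omega
    · rintro (⟨h, -⟩ | ⟨h0, -, hk⟩)
      · exact absurd h hlt
      · exact ⟨fun _ => h0, by rw [occ13_2_permCons_of_eq x σ h0, hk]⟩

end permCons_occ_succ

def gapCount (n k b : ℕ) : ℕ :=
  #{π : Perm (Fin n) | occ12_3 π = 0 ∧ occ13_2 π = k ∧ permVal π 0 + b + 1 = n}

lemma gapCount_eq_zero_of_le {n k b : ℕ} (h : n ≤ b) : gapCount n k b = 0 := by
  rw [gapCount, card_eq_zero, filter_eq_empty_iff]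
  omega

lemma sum_Ico_gapCount_eq_card (n k b : ℕ) :
    ∑ b' ∈ Ico b n, gapCount n k b' =
      #{π : Perm (Fin n) | occ12_3 π = 0 ∧ occ13_2 π = k ∧ permVal π 0 + b < n} := by
  rw [card_eq_sum_card_fiberwise (f := fun π => n - 1 - permVal π 0) (t := Ico b n)]
  · refine sum_congr rfl fun b' hb' => ?_
    rw [gapCount, filter_filter]
    refine congrArg card (filter_congr fun π _ => ?_)
    rw [mem_Ico] at hb'
    omega
  · intro π hπ
    simp only [coe_filter, mem_univ, true_and, Set.mem_ofPred_eq] at hπ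
    simp only [coe_Ico, Set.mem_Ico]
    omega

lemma gapCount_succ_succ {m k b : ℕ} (hb : b ≤ m + 1) :
    gapCount (m + 2) k b = ∑ b' ∈ Ico b (m + 1), gapCount (m + 1) k b' +
      if 1 ≤ b ∧ b ≤ k + 1 then gapCount (m + 1) (k + 1 - b) 0 else 0 := by
  obtain ⟨x, hx⟩ : ∃ x : Fin (m + 2), (x : ℕ) = m + 1 - b := ⟨⟨m + 1 - b, by omega⟩, rfl⟩
  have hfirst : gapCount (m + 2) k b =
      #{σ : Perm (Fin (m + 1)) | occ12_3 (permCons x σ) = 0 ∧ occ13_2 (permCons x σ) = k} := by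
    rw [gapCount, card_filter_perm_succ_eq_sum, sum_eq_single x]
    · refine congrArg card (filter_congr fun σ _ => ?_)
      rw [permVal_permCons_zero]
      omega
    · refine fun y _ hy => card_eq_zero.2 (filter_eq_empty_iff.2 fun σ _ => ?_)
      rw [permVal_permCons_zero]
      exact fun h => hy (Fin.ext (by omega))
    · simp
  rw [hfirst]
  simp_rw [occ12_3_and_occ13_2_permCons_iff, and_or_left, filter_or]
  rw [card_union_of_disjoint]
  · congr 1
    · rw [sum_Ico_gapCount_eq_card]
      refine congrArg card (filter_congr fun σ _ => ?_)
      omega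
    · split_ifs with h
      · refine congrArg card (filter_congr fun σ _ => ?_)
        omega
      · refine card_eq_zero.2 (filter_eq_empty_iff.2 fun σ _ => ?_)
        omega
  · refine disjoint_filter.2 fun σ _ h h' => ?_
    omega

lemma card_filter_occ_eq_gapCount (m k : ℕ) :
    #{π : Perm (Fin (m + 1)) | occ12_3 π = 0 ∧ occ13_2 π = k} = gapCount (m + 2) k 0 := by
  rw [gapCount_succ_succ (Nat.zero_le _), if_neg (by omega), add_zero, sum_Ico_gapCount_eq_card]
  refine congrArg card (filter_congr fun π _ => ?_)
  have := permVal_lt π (Nat.zero_lt_succ m)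
  omega

lemma gapCount_eq_zero_of_add_two_le {n k b : ℕ} (h : k + 2 ≤ b) : gapCount n k b = 0 := by
  induction n generalizing b with
  | zero => exact gapCount_eq_zero_of_le (Nat.zero_le b)
  | succ n ih =>
    rcases lt_or_ge n b with hnb | hbn
    · exact gapCount_eq_zero_of_le hnb
    · obtain ⟨m, rfl⟩ : ∃ m, n = m + 1 := ⟨n - 1, by omega⟩
      rw [gapCount_succ_succ hbn, if_neg (by omega), add_zero]
      exact sum_eq_zero fun b' hb' => ih (by rw [mem_Ico] at hb'; omega)

lemma sum_Ico_gapCount_eq_sum_Ico_add_two (n k b : ℕ) :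
    ∑ b' ∈ Ico b n, gapCount n k b' = ∑ b' ∈ Ico b (k + 2), gapCount n k b' := by
  refine (sum_subset (Ico_subset_Ico_right (le_max_left n (k + 2))) fun b' hb hb' => ?_).trans
    (sum_subset (Ico_subset_Ico_right (le_max_right n (k + 2))) fun b' hb hb' => ?_).symm
  all_goals rw [mem_Ico] at hb hb'
  · exact gapCount_eq_zero_of_le (by omega)
  · exact gapCount_eq_zero_of_add_two_le (by omega)

lemma gapCount_add_four {m k b : ℕ} (hb : b ≤ 3) :
    gapCount (m + 4) k b = ∑ b' ∈ Ico b (k + 2), gapCount (m + 3) k b' +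
      if 1 ≤ b ∧ b ≤ k + 1 then gapCount (m + 3) (k + 1 - b) 0 else 0 := by
  rw [gapCount_succ_succ (by omega), sum_Ico_gapCount_eq_sum_Ico_add_two]

lemma gapCount_add_three_occ_zero (m : ℕ) :
    gapCount (m + 3) 0 0 = 2 ^ (m + 1) ∧ gapCount (m + 3) 0 1 = 2 ^ (m + 1) := by
  induction m with
  | zero => decide
  | succ m ih =>
    rw [show m + 1 + 3 = m + 4 from rfl]
    simp (disch := decide) only [gapCount_add_four, if_pos, if_neg, sum_Ico_eq_sum_range,
      sum_range_succ, sum_range_zero, Nat.reduceSub, zero_add, add_zero, ih.1, ih.2]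
    constructor <;> ring

lemma gapCount_add_three_occ_one (m : ℕ) :
    (gapCount (m + 3) 1 0 : ℚ) = (m - 1) * 2 ^ m + 1 ∧
      (gapCount (m + 3) 1 1 : ℚ) = (m - 1) * 2 ^ m + 1 ∧
      (gapCount (m + 3) 1 2 : ℚ) = 2 ^ (m + 1) - 1 := by
  induction m with
  | zero =>
    have h : gapCount 3 1 0 = 0 ∧ gapCount 3 1 1 = 0 ∧ gapCount 3 1 2 = 1 := by decide
    norm_num [h]
  | succ m ih =>
    obtain ⟨h0, h1, h2⟩ := ih
    rw [show m + 1 + 3 = m + 4 from rfl]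
    simp (disch := decide) only [gapCount_add_four, if_pos, if_neg, sum_Ico_eq_sum_range,
      sum_range_succ, sum_range_zero, Nat.reduceAdd, Nat.reduceSub, zero_add, add_zero,
      Nat.cast_add, h0, h1, h2, (gapCount_add_three_occ_zero m).1, Nat.cast_pow, Nat.cast_ofNat]
    refine ⟨by ring, by ring, by ring⟩

lemma gapCount_add_three_occ_two (m : ℕ) :
    (gapCount (m + 3) 2 0 : ℚ) = ((m + 2) ^ 2 - 3 * (m + 2) - 6) * 2 ^ m / 4 + (m + 2) ∧
      (gapCount (m + 3) 2 1 : ℚ) = ((m + 2) ^ 2 - 3 * (m + 2) - 6) * 2 ^ m / 4 + (m + 2) ∧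
      (gapCount (m + 3) 2 2 : ℚ) = (m - 1) * (2 ^ m - 1) ∧
      (gapCount (m + 3) 2 3 : ℚ) = 2 ^ (m + 1) - 2 := by
  induction m with
  | zero =>
    have h : gapCount 3 2 0 = 0 ∧ gapCount 3 2 1 = 0 ∧ gapCount 3 2 2 = 0 ∧
        gapCount 3 2 3 = 0 := by
      decide
    norm_num [h]
  | succ m ih =>
    obtain ⟨h0, h1, h2, h3⟩ := ih
    rw [show m + 1 + 3 = m + 4 from rfl]
    simp (disch := decide) only [gapCount_add_four, if_pos, if_neg, sum_Ico_eq_sum_range,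
      sum_range_succ, sum_range_zero, Nat.reduceAdd, Nat.reduceSub, zero_add, add_zero,
      Nat.cast_add, h0, h1, h2, h3, (gapCount_add_three_occ_zero m).1,
      (gapCount_add_three_occ_one m).1, Nat.cast_pow, Nat.cast_ofNat]
    refine ⟨by ring, by ring, by ring, by ring⟩

theorem stmt2 (n : ℕ) (hn : 1 ≤ n) :
    ((Finset.univ.filter (fun π : Equiv.Perm (Fin n) =>
      occ12_3 π = 0 ∧ occ13_2 π = 2)).card : ℚ) =
      ((n : ℚ) ^ 2 - 3 * (n : ℚ) - 6) * (2 : ℚ) ^ ((n : ℤ) - 4) + (n : ℚ) := by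
  obtain ⟨m, rfl⟩ : ∃ m, n = m + 1 := ⟨n - 1, by omega⟩
  rw [card_filter_occ_eq_gapCount]
  rcases m with _ | m
  · have h : gapCount 2 2 0 = 0 := by decide
    norm_num [h]
  · rw [show m + 1 + 2 = m + 3 from rfl, (gapCount_add_three_occ_two m).1]
    have hpow : (2 : ℚ) ^ (((m + 1 + 1 : ℕ) : ℤ) - 4) = 2 ^ m / 4 := by
      rw [zpow_sub₀ two_ne_zero, zpow_natCast]
      push_cast
      ring
    rw [hpow]
    push_cast
    ring
end

section
/- Let f(n) denote the number of permutations of {1,...,n} avoiding both generalized patterns 12-3 and 21-3. Then f satisfies the recurrence f(n) = f(n-1) + (n-1)·f(n-2) for all n ≥ 2, with f(0) = f(1) = 1; equivalently, f(n) equals the number of involutions in S_n. -/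
open Equiv Finset

def Acard (n : ℕ) : ℕ := (Finset.univ.filter (fun π : Equiv.Perm (Fin n) =>
      occ12_3 π = 0 ∧ occ21_3 π = 0)).card

def Icard (n : ℕ) : ℕ := (Finset.univ.filter
      (fun σ : Equiv.Perm (Fin n) => σ * σ = 1)).card

lemma permVal_eq {n : ℕ} (π : Perm (Fin n)) {i : ℕ} (h : i < n) :
    permVal π i = (π ⟨i, h⟩ : ℕ) := dif_pos h

lemma permVal_lt_s3 {n : ℕ} (π : Perm (Fin n)) {i : ℕ} (h : i < n) :
    permVal π i < n := by rw [permVal_eq π h]; exact (π ⟨i, h⟩).isLt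

lemma permVal_inj {n : ℕ} (π : Perm (Fin n)) {i j : ℕ} (hi : i < n) (hj : j < n)
    (hne : i ≠ j) : permVal π i ≠ permVal π j := by
  rw [permVal_eq π hi, permVal_eq π hj]
  intro h
  have : π ⟨i, hi⟩ = π ⟨j, hj⟩ := Fin.val_injective h
  exact hne (by simpa [Fin.mk.injEq] using π.injective this)

lemma avoids_iff {n : ℕ} (π : Perm (Fin n)) :
    (occ12_3 π = 0 ∧ occ21_3 π = 0) ↔
      ∀ i j : ℕ, i + 1 < j → j < n →
        permVal π j < max (permVal π i) (permVal π (i + 1)) := by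
  unfold occ12_3 occ21_3
  rw [Finset.card_eq_zero, Finset.card_eq_zero, Finset.filter_eq_empty_iff,
    Finset.filter_eq_empty_iff]
  constructor
  · rintro ⟨h1, h2⟩ i j hij hj
    have hi : i < n := by omega
    have hi1 : i + 1 < n := by omega
    have hmem : (i, j) ∈ Finset.range n ×ˢ Finset.range n := by
      simp [Finset.mem_product]; omega
    have H1 := h1 hmem
    have H2 := h2 hmem
    simp only [hij, true_and, not_and, not_lt] at H1 H2
    have d1 := permVal_inj π hi hi1 (by omega)
    have d2 := permVal_inj π hi hj (by omega)
    have d3 := permVal_inj π hi1 hj (by omega)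
    rcases lt_or_gt_of_ne d1 with h | h
    · have := H1 h; omega
    · have := H2 h; omega
  · intro h
    constructor <;>
    · rintro ⟨i, j⟩ hmem hcon
      simp only at hcon
      obtain ⟨hij, hlt1, hlt2⟩ := hcon
      simp [Finset.mem_product] at hmem
      have := h i j hij hmem.2
      omega

lemma Acard_zero : Acard 0 = 1 := by decide
lemma Acard_one : Acard 1 = 1 := by decide
lemma Icard_zero : Icard 0 = 1 := by decide
lemma Icard_one : Icard 1 = 1 := by decide

noncomputable section
variable {n : ℕ}

/-- Top value of an avoider of length ≥ 2 is in the first two positions. -/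
lemma avoids_top (π : Perm (Fin (n + 2)))
    (h : occ12_3 π = 0 ∧ occ21_3 π = 0) :
    π 0 = Fin.last (n + 1) ∨ π 1 = Fin.last (n + 1) := by
  rw [avoids_iff] at h
  by_contra hc
  push_neg at hc
  obtain ⟨h0, h1⟩ := hc
  obtain ⟨p, hπp⟩ : ∃ p : Fin (n + 2), π p = Fin.last (n + 1) :=
    ⟨π.symm _, π.apply_symm_apply _⟩
  have hp0 : p ≠ 0 := by rintro rfl; exact h0 hπp
  have hp1 : p ≠ 1 := by rintro rfl; exact h1 hπp
  have hpv : 2 ≤ (p : ℕ) := by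
    rcases Nat.lt_or_ge (p : ℕ) 2 with hlt | hge
    · interval_cases hv : (p : ℕ)
      · exact absurd (Fin.ext hv) hp0
      · exact absurd (Fin.ext hv) hp1
    · exact hge
  have key := h 0 (p : ℕ) (by omega) p.isLt
  rw [show (0 : ℕ) + 1 = 1 from rfl] at key
  have e1 : permVal π (p : ℕ) = n + 1 := by
    rw [permVal_eq π p.isLt]
    simp only [Fin.eta, hπp, Fin.val_last]
  have e2 : permVal π 0 < n + 2 := permVal_lt_s3 π (by omega)
  have e3 : permVal π 1 < n + 2 := permVal_lt_s3 π (by omega)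
  have e2' : permVal π 0 ≠ n + 1 := by
    rw [permVal_eq π (show 0 < n + 2 by omega)]
    intro hv
    exact h0 (Fin.ext (by simpa using hv))
  have e3' : permVal π 1 ≠ n + 1 := by
    rw [permVal_eq π (show 1 < n + 2 by omega)]
    intro hv
    apply h1
    apply Fin.ext
    have he : (⟨1, by omega⟩ : Fin (n + 2)) = 1 := by
      apply Fin.ext; simp [Fin.val_one]
    rw [he] at hv
    simpa using hv
  omega

def g0 (σ : Perm (Fin (n + 1))) : Fin (n + 2) → Fin (n + 2) :=
  Fin.cases (Fin.last (n + 1)) (fun i => (σ i).castSucc)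

lemma g0_apply_zero (σ : Perm (Fin (n + 1))) : g0 σ 0 = Fin.last (n + 1) := rfl

lemma g0_apply_succ (σ : Perm (Fin (n + 1))) (i : Fin (n + 1)) :
    g0 σ i.succ = (σ i).castSucc := by simp [g0]

lemma g0_inj (σ : Perm (Fin (n + 1))) : Function.Injective (g0 σ) := by
  intro x y hxy
  induction x using Fin.cases with
  | zero =>
    induction y using Fin.cases with
    | zero => rfl
    | succ j =>
      rw [g0_apply_zero, g0_apply_succ] at hxy
      exact absurd hxy.symm (Fin.castSucc_lt_last _).ne
  | succ i =>
    induction y using Fin.cases with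
    | zero =>
      rw [g0_apply_zero, g0_apply_succ] at hxy
      exact absurd hxy (Fin.castSucc_lt_last _).ne
    | succ j =>
      rw [g0_apply_succ, g0_apply_succ] at hxy
      have := σ.injective (Fin.castSucc_injective _ hxy)
      rw [this]

def F0 (σ : Perm (Fin (n + 1))) : Perm (Fin (n + 2)) :=
  Equiv.ofBijective (g0 σ) (Finite.injective_iff_bijective.mp (g0_inj σ))

lemma F0_apply (σ : Perm (Fin (n + 1))) (x : Fin (n + 2)) : F0 σ x = g0 σ x := rfl

lemma permVal_F0_zero (σ : Perm (Fin (n + 1))) : permVal (F0 σ) 0 = n + 1 := by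
  rw [permVal_eq _ (show 0 < n + 2 by omega)]
  have : (⟨0, by omega⟩ : Fin (n + 2)) = 0 := rfl
  rw [this, F0_apply, g0_apply_zero, Fin.val_last]

lemma permVal_F0_succ (σ : Perm (Fin (n + 1))) {i : ℕ} (h : i < n + 1) :
    permVal (F0 σ) (i + 1) = permVal σ i := by
  rw [permVal_eq _ (show i + 1 < n + 2 by omega), permVal_eq σ h]
  have : (⟨i + 1, by omega⟩ : Fin (n + 2)) = (⟨i, h⟩ : Fin (n + 1)).succ := rfl
  rw [this, F0_apply, g0_apply_succ, Fin.coe_castSucc]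

lemma avoids_F0 (σ : Perm (Fin (n + 1))) :
    (occ12_3 (F0 σ) = 0 ∧ occ21_3 (F0 σ) = 0) ↔
      (occ12_3 σ = 0 ∧ occ21_3 σ = 0) := by
  rw [avoids_iff, avoids_iff]
  constructor
  · intro h i j hij hj
    have := h (i + 1) (j + 1) (by omega) (by omega)
    rwa [permVal_F0_succ σ (by omega), permVal_F0_succ σ (by omega),
      permVal_F0_succ σ (by omega)] at this
  · intro h i j hij hj
    rcases Nat.eq_zero_or_pos i with rfl | hi
    · rw [permVal_F0_zero]
      obtain ⟨j', rfl⟩ : ∃ j', j = j' + 1 := ⟨j - 1, by omega⟩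
      rw [permVal_F0_succ σ (by omega)]
      have := permVal_lt_s3 σ (i := j') (by omega)
      omega
    · obtain ⟨i', rfl⟩ : ∃ i', i = i' + 1 := ⟨i - 1, by omega⟩
      obtain ⟨j', rfl⟩ : ∃ j', j = j' + 1 := ⟨j - 1, by omega⟩
      rw [permVal_F0_succ σ (by omega), permVal_F0_succ σ (by omega),
        show i' + 1 + 1 = (i' + 1) + 1 from rfl,
        permVal_F0_succ σ (by omega)]
      exact h i' j' (by omega) (by omega)

lemma card_S0 :
    ((Finset.univ.filter (fun π : Perm (Fin (n + 2)) =>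
      (occ12_3 π = 0 ∧ occ21_3 π = 0) ∧ π 0 = Fin.last (n + 1))).card)
      = Acard (n + 1) := by
  rw [Acard]
  symm
  apply Finset.card_bij (fun σ _ => F0 σ)
  · intro σ hσ
    simp only [Finset.mem_filter, Finset.mem_univ, true_and] at hσ ⊢
    exact ⟨(avoids_F0 σ).mpr hσ, rfl⟩
  · intro σ1 _ σ2 _ hF
    ext i
    have : F0 σ1 i.succ = F0 σ2 i.succ := by rw [hF]
    rw [F0_apply, F0_apply, g0_apply_succ, g0_apply_succ] at this
    exact congrArg Fin.val (Fin.castSucc_injective _ this)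
  · intro π hπ
    simp only [Finset.mem_filter, Finset.mem_univ, true_and] at hπ
    obtain ⟨hav, h0⟩ := hπ
    have hne : ∀ i : Fin (n + 1), (π i.succ : ℕ) < n + 1 := by
      intro i
      have h1 : π i.succ ≠ Fin.last (n + 1) := by
        rw [← h0]
        exact fun hc => (Fin.succ_ne_zero i) (π.injective hc)
      have := (π i.succ).isLt
      have : (π i.succ : ℕ) ≠ n + 1 := fun hc => h1 (Fin.ext (by simpa using hc))
      omega
    set s : Fin (n + 1) → Fin (n + 1) := fun i => ⟨(π i.succ : ℕ), hne i⟩ with hs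
    have hsinj : Function.Injective s := by
      intro a b hab
      have hv : ((s a : Fin (n + 1)) : ℕ) = ((s b : Fin (n + 1)) : ℕ) :=
        congrArg Fin.val hab
      simp only [hs] at hv
      exact Fin.succ_injective _ (π.injective (Fin.ext hv))
    set σ : Perm (Fin (n + 1)) :=
      Equiv.ofBijective s (Finite.injective_iff_bijective.mp hsinj) with hσ
    have hFσ : F0 σ = π := by
      ext x
      induction x using Fin.cases with
      | zero => rw [F0_apply, g0_apply_zero, h0]
      | succ i =>
        rw [F0_apply, g0_apply_succ]
        have : σ i = s i := rfl
        rw [this]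
        rfl
    refine ⟨σ, ?_, hFσ⟩
    simp only [Finset.mem_filter, Finset.mem_univ, true_and]
    rw [← avoids_F0 σ, hFσ]
    exact hav

lemma fin_cases2 (x : Fin (n + 2)) :
    x = 0 ∨ x = 1 ∨ ∃ j : Fin n, x = j.succ.succ := by
  rcases Fin.eq_zero_or_eq_succ x with rfl | ⟨y, rfl⟩
  · left; rfl
  rcases Fin.eq_zero_or_eq_succ y with rfl | ⟨j, rfl⟩
  · right; left; exact Fin.succ_zero_eq_one
  · right; right; exact ⟨j, rfl⟩

def g1 (a : Fin (n + 1)) (σ : Perm (Fin n)) : Fin (n + 2) → Fin (n + 2) :=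
  Fin.cases a.castSucc
    (Fin.cases (Fin.last (n + 1)) (fun j => (a.succAbove (σ j)).castSucc))

lemma g1_zero (a : Fin (n + 1)) (σ : Perm (Fin n)) : g1 a σ 0 = a.castSucc := rfl

lemma g1_one (a : Fin (n + 1)) (σ : Perm (Fin n)) :
    g1 a σ 1 = Fin.last (n + 1) := by
  rw [← Fin.succ_zero_eq_one]
  simp only [g1, Fin.cases_succ, Fin.cases_zero]

lemma g1_two (a : Fin (n + 1)) (σ : Perm (Fin n)) (j : Fin n) :
    g1 a σ j.succ.succ = (a.succAbove (σ j)).castSucc := by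
  simp only [g1, Fin.cases_succ]

lemma g1_inj (a : Fin (n + 1)) (σ : Perm (Fin n)) : Function.Injective (g1 a σ) := by
  have hA : ∀ x : Fin n, (a.succAbove x).castSucc ≠ a.castSucc := fun x h =>
    Fin.succAbove_ne a x (Fin.castSucc_injective _ h)
  have hB : ∀ x : Fin n, (a.succAbove x).castSucc ≠ Fin.last (n + 1) := fun x =>
    (Fin.castSucc_lt_last _).ne
  have hC : a.castSucc ≠ Fin.last (n + 1) := (Fin.castSucc_lt_last a).ne
  intro x y hxy
  rcases fin_cases2 x with rfl | rfl | ⟨j, rfl⟩ <;>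
    rcases fin_cases2 y with rfl | rfl | ⟨k, rfl⟩
  · rfl
  · rw [g1_zero, g1_one] at hxy; exact absurd hxy hC
  · rw [g1_zero, g1_two] at hxy; exact absurd hxy.symm (hA _)
  · rw [g1_zero, g1_one] at hxy; exact absurd hxy.symm hC
  · rfl
  · rw [g1_one, g1_two] at hxy; exact absurd hxy.symm (hB _)
  · rw [g1_zero, g1_two] at hxy; exact absurd hxy (hA _)
  · rw [g1_one, g1_two] at hxy; exact absurd hxy (hB _)
  · rw [g1_two, g1_two] at hxy
    have := σ.injective (Fin.succAbove_right_injective (Fin.castSucc_injective _ hxy))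
    rw [this]

def F1 (a : Fin (n + 1)) (σ : Perm (Fin n)) : Perm (Fin (n + 2)) :=
  Equiv.ofBijective (g1 a σ) (Finite.injective_iff_bijective.mp (g1_inj a σ))

lemma F1_apply (a : Fin (n + 1)) (σ : Perm (Fin n)) (x : Fin (n + 2)) :
    F1 a σ x = g1 a σ x := rfl

lemma permVal_F1_zero (a : Fin (n + 1)) (σ : Perm (Fin n)) :
    permVal (F1 a σ) 0 = (a : ℕ) := by
  rw [permVal_eq _ (show 0 < n + 2 by omega)]
  have : (⟨0, by omega⟩ : Fin (n + 2)) = 0 := rfl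
  rw [this, F1_apply, g1_zero, Fin.coe_castSucc]

lemma permVal_F1_one (a : Fin (n + 1)) (σ : Perm (Fin n)) :
    permVal (F1 a σ) 1 = n + 1 := by
  rw [permVal_eq _ (show 1 < n + 2 by omega)]
  have : (⟨1, by omega⟩ : Fin (n + 2)) = 1 := by
    apply Fin.ext; simp [Fin.val_one]
  rw [this, F1_apply, g1_one, Fin.val_last]

lemma permVal_F1_two (a : Fin (n + 1)) (σ : Perm (Fin n)) {j : ℕ} (h : j < n) :
    permVal (F1 a σ) (j + 2) = ((a.succAbove (σ ⟨j, h⟩) : Fin (n + 1)) : ℕ) := by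
  rw [permVal_eq _ (show j + 2 < n + 2 by omega)]
  have : (⟨j + 2, by omega⟩ : Fin (n + 2)) = (⟨j, h⟩ : Fin n).succ.succ := rfl
  rw [this, F1_apply, g1_two, Fin.coe_castSucc]

lemma mono_succAbove (a : Fin (n + 1)) (x y : Fin n) :
    ((a.succAbove x : Fin (n + 1)) : ℕ) < ((a.succAbove y : Fin (n + 1)) : ℕ) ↔
      (x : ℕ) < (y : ℕ) := by
  rw [← Fin.lt_def, ← Fin.lt_def, Fin.succAbove_lt_succAbove_iff]

lemma avoids_F1 (a : Fin (n + 1)) (σ : Perm (Fin n)) :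
    (occ12_3 (F1 a σ) = 0 ∧ occ21_3 (F1 a σ) = 0) ↔
      (occ12_3 σ = 0 ∧ occ21_3 σ = 0) := by
  rw [avoids_iff, avoids_iff]
  constructor
  · intro h i j hij hj
    have hj' : j < n := by omega
    have hi' : i < n := by omega
    have hi1' : i + 1 < n := by omega
    have key := h (i + 2) (j + 2) (by omega) (by omega)
    rw [show i + 2 + 1 = i + 1 + 2 from rfl] at key
    have e1 := permVal_F1_two a σ hj'
    have e2 := permVal_F1_two a σ hi'
    have e3 := permVal_F1_two a σ hi1'
    have p1 := permVal_eq σ hj'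
    have p2 := permVal_eq σ hi'
    have p3 := permVal_eq σ hi1'
    have m12 := mono_succAbove a (σ ⟨j, hj'⟩) (σ ⟨i, hi'⟩)
    have m13 := mono_succAbove a (σ ⟨j, hj'⟩) (σ ⟨i + 1, hi1'⟩)
    omega
  · intro h i j hij hj
    match i, hij with
    | 0, _ =>
      obtain ⟨j', rfl⟩ : ∃ j', j = j' + 2 := ⟨j - 2, by omega⟩
      rw [permVal_F1_two a σ (show j' < n by omega), permVal_F1_zero,
        show (0 : ℕ) + 1 = 1 from rfl, permVal_F1_one]
      have := (a.succAbove (σ ⟨j', by omega⟩)).isLt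
      omega
    | 1, _ =>
      obtain ⟨j', rfl⟩ : ∃ j', j = j' + 2 := ⟨j - 2, by omega⟩
      rw [permVal_F1_two a σ (show j' < n by omega), permVal_F1_one]
      have := (a.succAbove (σ ⟨j', by omega⟩)).isLt
      omega
    | (i' + 2), _ =>
      obtain ⟨j', rfl⟩ : ∃ j', j = j' + 2 := ⟨j - 2, by omega⟩
      have hj' : j' < n := by omega
      have hi' : i' < n := by omega
      have hi1' : i' + 1 < n := by omega
      have key := h i' j' (by omega) (by omega)
      rw [show i' + 2 + 1 = i' + 1 + 2 from rfl]
      have e1 := permVal_F1_two a σ hj'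
      have e2 := permVal_F1_two a σ hi'
      have e3 := permVal_F1_two a σ hi1'
      have p1 := permVal_eq σ hj'
      have p2 := permVal_eq σ hi'
      have p3 := permVal_eq σ hi1'
      have m12 := mono_succAbove a (σ ⟨j', hj'⟩) (σ ⟨i', hi'⟩)
      have m13 := mono_succAbove a (σ ⟨j', hj'⟩) (σ ⟨i' + 1, hi1'⟩)
      omega

lemma card_S1 :
    ((Finset.univ.filter (fun π : Perm (Fin (n + 2)) =>
      (occ12_3 π = 0 ∧ occ21_3 π = 0) ∧ π 1 = Fin.last (n + 1))).card)
      = (n + 1) * Acard n := by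
  have hrhs : (n + 1) * Acard n =
      ((Finset.univ : Finset (Fin (n + 1))) ×ˢ
        (Finset.univ.filter (fun σ : Perm (Fin n) =>
          occ12_3 σ = 0 ∧ occ21_3 σ = 0))).card := by
    rw [Finset.card_product, Finset.card_univ, Fintype.card_fin, Acard]
  rw [hrhs]
  symm
  apply Finset.card_bij (fun p _ => F1 p.1 p.2)
  · rintro ⟨a, σ⟩ hp
    simp only [Finset.mem_product, Finset.mem_filter, Finset.mem_univ, true_and] at hp ⊢
    refine ⟨(avoids_F1 a σ).mpr hp, ?_⟩
    rw [F1_apply, g1_one]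
  · rintro ⟨a, σ⟩ _ ⟨a', σ'⟩ _ hF
    have h0 : F1 a σ 0 = F1 a' σ' 0 := by rw [hF]
    rw [F1_apply, F1_apply, g1_zero, g1_zero] at h0
    have ha : a = a' := Fin.castSucc_injective _ h0
    subst ha
    have hσ : σ = σ' := by
      ext j
      have h2 : F1 a σ j.succ.succ = F1 a σ' j.succ.succ := by rw [hF]
      rw [F1_apply, F1_apply, g1_two, g1_two] at h2
      exact congrArg Fin.val
        (Fin.succAbove_right_injective (Fin.castSucc_injective _ h2))
    rw [hσ]
  · intro π hπ
    simp only [Finset.mem_filter, Finset.mem_univ, true_and] at hπ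
    obtain ⟨hav, h1⟩ := hπ
    have h01 : (0 : Fin (n + 2)) ≠ 1 := by
      intro hc
      have := congrArg Fin.val hc
      simp [Fin.val_one] at this
    have hπ0 : π 0 ≠ Fin.last (n + 1) := by
      rw [← h1]; exact fun hc => h01 (π.injective hc)
    have hπ0v : (π 0 : ℕ) < n + 1 := by
      have := (π 0).isLt
      have : (π 0 : ℕ) ≠ n + 1 := fun hc => hπ0 (Fin.ext (by simpa using hc))
      omega
    set a : Fin (n + 1) := ⟨(π 0 : ℕ), hπ0v⟩ with ha
    have hyval : ∀ j : Fin n, (π j.succ.succ : ℕ) < n + 1 := by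
      intro j
      have hne : π j.succ.succ ≠ Fin.last (n + 1) := by
        rw [← h1]
        intro hc
        have := π.injective hc
        rw [← Fin.succ_zero_eq_one] at this
        exact Fin.succ_ne_zero j (Fin.succ_injective _ this)
      have := (π j.succ.succ).isLt
      have : (π j.succ.succ : ℕ) ≠ n + 1 := fun hc => hne (Fin.ext (by simpa using hc))
      omega
    have hy' : ∀ j : Fin n, (⟨(π j.succ.succ : ℕ), hyval j⟩ : Fin (n + 1)) ≠ a := by
      intro j hc
      have hcv := congrArg Fin.val hc
      simp only [ha] at hcv
      have : π j.succ.succ = π 0 := Fin.ext hcv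
      exact Fin.succ_ne_zero _ (π.injective this)
    set s : Fin n → Fin n := fun j => Classical.choose (Fin.exists_succAbove_eq (hy' j))
      with hsdef
    have hspec : ∀ j : Fin n, a.succAbove (s j) = ⟨(π j.succ.succ : ℕ), hyval j⟩ :=
      fun j => Classical.choose_spec (Fin.exists_succAbove_eq (hy' j))
    have hsinj : Function.Injective s := by
      intro x y hxy
      have : a.succAbove (s x) = a.succAbove (s y) := by rw [hxy]
      rw [hspec x, hspec y] at this
      have hv := congrArg Fin.val this
      simp only at hv
      have : π x.succ.succ = π y.succ.succ := Fin.ext hv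
      exact Fin.succ_injective _ (Fin.succ_injective _ (π.injective this))
    set σ : Perm (Fin n) :=
      Equiv.ofBijective s (Finite.injective_iff_bijective.mp hsinj) with hσ
    have hFσ : F1 a σ = π := by
      ext x
      rcases fin_cases2 x with rfl | rfl | ⟨j, rfl⟩
      · rw [F1_apply, g1_zero]
        exact congrArg Fin.val (Fin.ext rfl : a.castSucc = π 0)
      · rw [F1_apply, g1_one, h1]
      · rw [F1_apply, g1_two]
        have hσj : σ j = s j := rfl
        rw [hσj]
        have hv := congrArg Fin.val (hspec j)
        simp only at hv
        simpa using hv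
    refine ⟨⟨a, σ⟩, ?_, hFσ⟩
    simp only [Finset.mem_product, Finset.mem_filter, Finset.mem_univ, true_and]
    rw [← avoids_F1 a σ, hFσ]
    exact hav

lemma Acard_rec : Acard (n + 2) = Acard (n + 1) + (n + 1) * Acard n := by
  classical
  rw [← card_S0 (n := n), ← card_S1 (n := n)]
  have hsplit := Finset.card_filter_add_card_filter_not
    (s := (Finset.univ.filter (fun π : Perm (Fin (n + 2)) =>
      occ12_3 π = 0 ∧ occ21_3 π = 0)))
    (p := fun π => π 0 = Fin.last (n + 1))
  rw [Finset.filter_filter, Finset.filter_filter] at hsplit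
  have hcongr : (Finset.univ.filter (fun π : Perm (Fin (n + 2)) =>
      (occ12_3 π = 0 ∧ occ21_3 π = 0) ∧ ¬π 0 = Fin.last (n + 1))) =
      (Finset.univ.filter (fun π : Perm (Fin (n + 2)) =>
      (occ12_3 π = 0 ∧ occ21_3 π = 0) ∧ π 1 = Fin.last (n + 1))) := by
    apply Finset.filter_congr
    intro π _
    constructor
    · rintro ⟨hav, h0⟩
      rcases avoids_top π hav with hc | hc
      · exact absurd hc h0
      · exact ⟨hav, hc⟩
    · rintro ⟨hav, h1⟩
      refine ⟨hav, fun h0 => ?_⟩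
      have : (0 : Fin (n + 2)) = 1 := π.injective (h0.trans h1.symm)
      have := congrArg Fin.val this
      simp [Fin.val_one] at this
  rw [hcongr] at hsplit
  rw [Acard]
  exact hsplit.symm

/-! ### Involutions -/

def succEmb2 : Fin (n + 1) ↪ Fin (n + 2) := ⟨Fin.succ, Fin.succ_injective _⟩

def G0 (τ : Perm (Fin (n + 1))) : Perm (Fin (n + 2)) :=
  τ.viaEmbedding succEmb2

lemma G0_zero (τ : Perm (Fin (n + 1))) : G0 τ 0 = 0 := by
  apply Equiv.Perm.viaEmbedding_apply_of_notMem
  rintro ⟨y, hy⟩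
  exact Fin.succ_ne_zero y hy

lemma G0_succ (τ : Perm (Fin (n + 1))) (j : Fin (n + 1)) :
    G0 τ j.succ = (τ j).succ := Equiv.Perm.viaEmbedding_apply τ succEmb2 j

lemma G0_hom (τ : Perm (Fin (n + 1))) :
    G0 τ = Equiv.Perm.viaEmbeddingHom succEmb2 τ := rfl

lemma G0_inv_iff (τ : Perm (Fin (n + 1))) : G0 τ * G0 τ = 1 ↔ τ * τ = 1 := by
  rw [G0_hom, ← map_mul]
  constructor
  · intro h
    apply Equiv.Perm.viaEmbeddingHom_injective succEmb2
    rw [h, map_one]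
  · intro h
    rw [h, map_one]

lemma card_T0 :
    ((Finset.univ.filter (fun σ : Perm (Fin (n + 2)) =>
      σ * σ = 1 ∧ σ 0 = 0)).card) = Icard (n + 1) := by
  rw [Icard]
  symm
  apply Finset.card_bij (fun τ _ => G0 τ)
  · intro τ hτ
    simp only [Finset.mem_filter, Finset.mem_univ, true_and] at hτ ⊢
    exact ⟨(G0_inv_iff τ).mpr hτ, G0_zero τ⟩
  · intro τ1 _ τ2 _ hG
    rw [G0_hom, G0_hom] at hG
    exact Equiv.Perm.viaEmbeddingHom_injective succEmb2 hG
  · intro σ hσ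
    simp only [Finset.mem_filter, Finset.mem_univ, true_and] at hσ
    obtain ⟨hinv, h0⟩ := hσ
    have hne : ∀ j : Fin (n + 1), σ j.succ ≠ 0 := by
      intro j hc
      rw [← h0] at hc
      exact Fin.succ_ne_zero j (σ.injective hc)
    set t : Fin (n + 1) → Fin (n + 1) := fun j => (σ j.succ).pred (hne j) with ht
    have htinj : Function.Injective t := by
      intro x y hxy
      have : σ x.succ = σ y.succ := by
        rw [← Fin.succ_pred (σ x.succ) (hne x), ← Fin.succ_pred (σ y.succ) (hne y)]
        exact congrArg Fin.succ hxy
      exact Fin.succ_injective _ (σ.injective this)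
    set τ : Perm (Fin (n + 1)) :=
      Equiv.ofBijective t (Finite.injective_iff_bijective.mp htinj) with hτ
    have hGτ : G0 τ = σ := by
      apply Equiv.ext
      intro x
      rcases Fin.eq_zero_or_eq_succ x with rfl | ⟨y, rfl⟩
      · rw [G0_zero, h0]
      · rw [G0_succ]
        have : τ y = t y := rfl
        rw [this, ht]
        exact Fin.succ_pred _ _
    refine ⟨τ, ?_, hGτ⟩
    simp only [Finset.mem_filter, Finset.mem_univ, true_and]
    rw [← G0_inv_iff, hGτ]
    exact hinv

def embI (a : Fin (n + 1)) : Fin n ↪ Fin (n + 2) :=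
  ⟨fun j => (a.succAbove j).succ, by
    intro x y h
    exact Fin.succAbove_right_injective (Fin.succ_injective _ h)⟩

lemma embI_ne_zero (a : Fin (n + 1)) (j : Fin n) : embI a j ≠ 0 :=
  Fin.succ_ne_zero _

lemma embI_ne_asucc (a : Fin (n + 1)) (j : Fin n) : embI a j ≠ a.succ :=
  fun h => Fin.succAbove_ne a j (Fin.succ_injective _ h)

lemma cases3 (a : Fin (n + 1)) (x : Fin (n + 2)) :
    x = 0 ∨ x = a.succ ∨ ∃ j : Fin n, x = embI a j := by
  rcases Fin.eq_zero_or_eq_succ x with rfl | ⟨y, rfl⟩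
  · left; rfl
  rcases eq_or_ne y a with rfl | hy
  · right; left; rfl
  obtain ⟨j, hj⟩ := Fin.exists_succAbove_eq hy
  right; right
  exact ⟨j, by rw [show embI a j = (a.succAbove j).succ from rfl, hj]⟩

def G1I (a : Fin (n + 1)) (τ : Perm (Fin n)) : Perm (Fin (n + 2)) :=
  Equiv.swap 0 a.succ * τ.viaEmbedding (embI a)

lemma E_zero (a : Fin (n + 1)) (τ : Perm (Fin n)) : τ.viaEmbedding (embI a) 0 = 0 := by
  apply Equiv.Perm.viaEmbedding_apply_of_notMem
  rintro ⟨y, hy⟩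
  exact embI_ne_zero a y hy

lemma E_asucc (a : Fin (n + 1)) (τ : Perm (Fin n)) :
    τ.viaEmbedding (embI a) a.succ = a.succ := by
  apply Equiv.Perm.viaEmbedding_apply_of_notMem
  rintro ⟨y, hy⟩
  exact embI_ne_asucc a y hy

lemma E_emb (a : Fin (n + 1)) (τ : Perm (Fin n)) (j : Fin n) :
    τ.viaEmbedding (embI a) (embI a j) = embI a (τ j) :=
  Equiv.Perm.viaEmbedding_apply τ (embI a) j

lemma G1I_zero (a : Fin (n + 1)) (τ : Perm (Fin n)) : G1I a τ 0 = a.succ := by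
  rw [G1I, Equiv.Perm.mul_apply, E_zero, Equiv.swap_apply_left]

lemma G1I_asucc (a : Fin (n + 1)) (τ : Perm (Fin n)) : G1I a τ a.succ = 0 := by
  rw [G1I, Equiv.Perm.mul_apply, E_asucc, Equiv.swap_apply_right]

lemma G1I_emb (a : Fin (n + 1)) (τ : Perm (Fin n)) (j : Fin n) :
    G1I a τ (embI a j) = embI a (τ j) := by
  rw [G1I, Equiv.Perm.mul_apply, E_emb,
    Equiv.swap_apply_of_ne_of_ne (embI_ne_zero a _) (embI_ne_asucc a _)]

lemma E_comm (a : Fin (n + 1)) (τ : Perm (Fin n)) :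
    τ.viaEmbedding (embI a) * Equiv.swap 0 a.succ =
      Equiv.swap 0 a.succ * τ.viaEmbedding (embI a) := by
  apply Equiv.ext
  intro x
  rw [Equiv.Perm.mul_apply, Equiv.Perm.mul_apply]
  rcases cases3 a x with rfl | rfl | ⟨j, rfl⟩
  · rw [Equiv.swap_apply_left, E_asucc, E_zero, Equiv.swap_apply_left]
  · rw [Equiv.swap_apply_right, E_zero, E_asucc, Equiv.swap_apply_right]
  · rw [Equiv.swap_apply_of_ne_of_ne (embI_ne_zero a _) (embI_ne_asucc a _), E_emb,
      Equiv.swap_apply_of_ne_of_ne (embI_ne_zero a _) (embI_ne_asucc a _)]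

lemma G1I_inv_iff (a : Fin (n + 1)) (τ : Perm (Fin n)) :
    G1I a τ * G1I a τ = 1 ↔ τ * τ = 1 := by
  have hsq : G1I a τ * G1I a τ =
      τ.viaEmbedding (embI a) * τ.viaEmbedding (embI a) := by
    rw [G1I]
    calc Equiv.swap 0 a.succ * τ.viaEmbedding (embI a) *
        (Equiv.swap 0 a.succ * τ.viaEmbedding (embI a))
        = Equiv.swap 0 a.succ * (τ.viaEmbedding (embI a) * Equiv.swap 0 a.succ) *
          τ.viaEmbedding (embI a) := by group
      _ = Equiv.swap 0 a.succ * (Equiv.swap 0 a.succ * τ.viaEmbedding (embI a)) *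
          τ.viaEmbedding (embI a) := by rw [E_comm]
      _ = (Equiv.swap 0 a.succ * Equiv.swap 0 a.succ) *
          (τ.viaEmbedding (embI a) * τ.viaEmbedding (embI a)) := by group
      _ = τ.viaEmbedding (embI a) * τ.viaEmbedding (embI a) := by
          rw [Equiv.swap_mul_self, one_mul]
  rw [hsq]
  rw [show τ.viaEmbedding (embI a) = Equiv.Perm.viaEmbeddingHom (embI a) τ from rfl,
    ← map_mul]
  constructor
  · intro h
    apply Equiv.Perm.viaEmbeddingHom_injective (embI a)
    rw [h, map_one]
  · intro h
    rw [h, map_one]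

lemma card_T1 :
    ((Finset.univ.filter (fun σ : Perm (Fin (n + 2)) =>
      σ * σ = 1 ∧ ¬σ 0 = 0)).card) = (n + 1) * Icard n := by
  have hrhs : (n + 1) * Icard n =
      ((Finset.univ : Finset (Fin (n + 1))) ×ˢ
        (Finset.univ.filter (fun τ : Perm (Fin n) => τ * τ = 1))).card := by
    rw [Finset.card_product, Finset.card_univ, Fintype.card_fin, Icard]
  rw [hrhs]
  symm
  apply Finset.card_bij (fun p _ => G1I p.1 p.2)
  · rintro ⟨a, τ⟩ hp
    simp only [Finset.mem_product, Finset.mem_filter, Finset.mem_univ, true_and] at hp ⊢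
    refine ⟨(G1I_inv_iff a τ).mpr hp, ?_⟩
    rw [G1I_zero]
    exact Fin.succ_ne_zero a
  · rintro ⟨a, τ⟩ _ ⟨a', τ'⟩ _ hG
    have h0 : G1I a τ 0 = G1I a' τ' 0 := by rw [hG]
    rw [G1I_zero, G1I_zero] at h0
    have ha : a = a' := Fin.succ_injective _ h0
    subst ha
    have hτ : τ = τ' := by
      ext j
      have h2 : G1I a τ (embI a j) = G1I a τ' (embI a j) := by rw [hG]
      rw [G1I_emb, G1I_emb] at h2
      exact congrArg Fin.val ((embI a).injective h2)
    rw [hτ]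
  · intro σ hσ
    simp only [Finset.mem_filter, Finset.mem_univ, true_and] at hσ
    obtain ⟨hinv, h0⟩ := hσ
    set a : Fin (n + 1) := (σ 0).pred h0 with ha
    have hb : a.succ = σ 0 := Fin.succ_pred _ _
    have hσb : σ (σ 0) = 0 := by
      have := congrFun (congrArg (fun e : Perm (Fin (n + 2)) => (e : Fin (n + 2) → Fin (n + 2))) hinv) 0
      simpa [Equiv.Perm.mul_apply] using this
    have hz : ∀ j : Fin n, ∃ k : Fin n, embI a k = σ (embI a j) := by
      intro j
      rcases cases3 a (σ (embI a j)) with hc | hc | ⟨k, hk⟩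
      · exfalso
        have heq : embI a j = σ 0 := σ.injective (hc.trans hσb.symm)
        exact embI_ne_asucc a j (by rw [heq, ← hb])
      · exfalso
        rw [hb] at hc
        exact embI_ne_zero a j (σ.injective hc)
      · exact ⟨k, hk.symm⟩
    set t : Fin n → Fin n := fun j => Classical.choose (hz j) with htdef
    have hspec : ∀ j, embI a (t j) = σ (embI a j) := fun j => Classical.choose_spec (hz j)
    have htinj : Function.Injective t := by
      intro x y hxy
      have h1 : σ (embI a x) = σ (embI a y) := by rw [← hspec x, ← hspec y, hxy]
      exact (embI a).injective (σ.injective h1)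
    set τ : Perm (Fin n) :=
      Equiv.ofBijective t (Finite.injective_iff_bijective.mp htinj) with hτ
    have hGσ : G1I a τ = σ := by
      apply Equiv.ext
      intro x
      rcases cases3 a x with rfl | rfl | ⟨j, rfl⟩
      · rw [G1I_zero, hb]
      · rw [G1I_asucc, hb, hσb]
      · rw [G1I_emb]
        have hτj : τ j = t j := rfl
        rw [hτj, hspec j]
    refine ⟨⟨a, τ⟩, ?_, hGσ⟩
    simp only [Finset.mem_product, Finset.mem_filter, Finset.mem_univ, true_and]
    rw [← G1I_inv_iff a τ, hGσ]
    exact hinv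

lemma Icard_rec : Icard (n + 2) = Icard (n + 1) + (n + 1) * Icard n := by
  classical
  rw [← card_T0 (n := n), ← card_T1 (n := n)]
  have hsplit := Finset.card_filter_add_card_filter_not
    (s := (Finset.univ.filter (fun σ : Perm (Fin (n + 2)) => σ * σ = 1)))
    (p := fun σ => σ 0 = 0)
  rw [Finset.filter_filter, Finset.filter_filter] at hsplit
  rw [Icard]
  exact hsplit.symm

lemma Acard_eq_Icard : ∀ n, Acard n = Icard n := by
  intro n
  induction n using Nat.strong_induction_on with
  | _ n ih =>
    match n, ih with
    | 0, _ => exact Acard_zero.trans Icard_zero.symm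
    | 1, _ => exact Acard_one.trans Icard_one.symm
    | (k + 2), ih => rw [Acard_rec, Icard_rec, ih (k + 1) (by omega), ih k (by omega)]

end

theorem stmt3 (f : ℕ → ℕ)
    (hf : ∀ n, f n = (Finset.univ.filter (fun π : Equiv.Perm (Fin n) =>
      occ12_3 π = 0 ∧ occ21_3 π = 0)).card) :
    f 0 = 1 ∧ f 1 = 1 ∧
    (∀ n, 2 ≤ n → f n = f (n - 1) + (n - 1) * f (n - 2)) ∧
    (∀ n, f n = (Finset.univ.filter
      (fun σ : Equiv.Perm (Fin n) => σ * σ = 1)).card) := by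
  have hfA : ∀ n, f n = Acard n := hf
  refine ⟨?_, ?_, ?_, ?_⟩
  · rw [hfA 0, Acard_zero]
  · rw [hfA 1, Acard_one]
  · intro n hn
    obtain ⟨k, rfl⟩ : ∃ k, n = k + 2 := ⟨n - 2, by omega⟩
    have h1 : k + 2 - 1 = k + 1 := by omega
    have h2 : k + 2 - 2 = k := by omega
    rw [h1, h2, hfA (k + 2), hfA (k + 1), hfA k]
    exact Acard_rec
  · intro n
    rw [hfA n]
    exact Acard_eq_Icard n
end
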